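/- arXiv:2510.04538 — 2 statements merged into one kernel-verified Lean document; each statement's English description precedes it below -/
import Mathlib

section
/- Let f : [0,∞) → [0,∞) be continuous with a unique fixed point x̄. If f has no 2-cycle (i.e., f(f(x)) = x implies x = x̄) and x̄ is locally asymptotically stable in the sense that (f(x) - x)(x - x̄) < 0 for all x ≠ x̄, then every orbit of f converges to x̄. -/
/-!
The orbit stays in a compact interval, so its set `ω` of cluster points satisfies `ω ⊆ f '' ω`;
let `l ≤ L` be the least and greatest elements of `ω`. Since `f (f 0) > 0` (the point `0` is not
on a 2-cycle) and `f (f y) - y` has no zero in `[0, x̄)`, we get `f (f y) > y` on `[0, x̄)`.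
If `L > x̄`, preimages `p ↦ L` and `q ↦ l` in `ω` satisfy `p < x̄ < q`, and the intermediate
value theorem gives `s ∈ [p, x̄)` with `f s = q`; then `f (f s) = l ≤ s`, a contradiction.
So `L ≤ x̄`, and `l < x̄` is impossible too, since a preimage of `l` in `ω` would lie above `x̄`.
-/

open Set Filter Topology

theorem IsCompact.exists_mapClusterPt_apply_eq {X : Type*} [TopologicalSpace X]
    [FirstCountableTopology X] [T2Space X] {f : X → X} {K : Set X} {u : ℕ → X} {c : X}
    (hK : IsCompact K) (hf : ContinuousOn f K) (hu : ∀ n, u n ∈ K)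
    (hc : MapClusterPt c atTop (f ∘ u)) :
    ∃ p ∈ K, MapClusterPt p atTop u ∧ f p = c := by
  obtain ⟨φ, hφ, hφc⟩ := hc.tendsto_subseq
  obtain ⟨p, hpK, ψ, hψ, hψp⟩ := hK.tendsto_subseq fun k => hu (φ k)
  refine ⟨p, hpK, hψp.mapClusterPt.of_comp (hφ.comp hψ).tendsto_atTop, ?_⟩
  have hψp' : Tendsto (u ∘ φ ∘ ψ) atTop (𝓝[K] p) :=
    tendsto_nhdsWithin_iff.2 ⟨hψp, .of_forall fun k => hu _⟩
  exact tendsto_nhds_unique ((hf p hpK).tendsto.comp hψp') (hφc.comp hψ.tendsto_atTop)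

theorem mapClusterPt_iterate_succ_iff {X : Type*} [TopologicalSpace X] {f : X → X} {x c : X} :
    MapClusterPt c atTop (f ∘ fun n => f^[n] x) ↔ MapClusterPt c atTop fun n => f^[n] x := by
  have : (f ∘ fun n => f^[n] x) = (fun n => f^[n] x) ∘ (· + 1) :=
    funext fun n => (Function.iterate_succ_apply' f n x).symm
  rw [this, mapClusterPt_comp, map_add_atTop_eq_nat]

section Stability

variable {f : ℝ → ℝ} {xbar : ℝ}

theorem lt_apply_of_lt (hstab : ∀ x ∈ Ici 0, x ≠ xbar → (f x - x) * (x - xbar) < 0)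
    {y : ℝ} (hy0 : 0 ≤ y) (hy : y < xbar) : y < f y := by
  nlinarith [hstab y hy0 hy.ne]

theorem apply_lt_of_lt (hstab : ∀ x ∈ Ici 0, x ≠ xbar → (f x - x) * (x - xbar) < 0)
    {y : ℝ} (hy0 : 0 ≤ y) (hy : xbar < y) : f y < y := by
  nlinarith [hstab y hy0 hy.ne']

theorem exists_mapsTo_Icc (hmap : MapsTo f (Ici 0) (Ici 0)) (hcont : ContinuousOn f (Ici 0))
    (hxbar : 0 ≤ xbar) (hstab : ∀ x ∈ Ici 0, x ≠ xbar → (f x - x) * (x - xbar) < 0)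
    {x : ℝ} (hx : 0 ≤ x) : ∃ C, x ∈ Icc 0 C ∧ MapsTo f (Icc 0 C) (Icc 0 C) := by
  obtain ⟨m, -, hm⟩ := isCompact_Icc.exists_isMaxOn (nonempty_Icc.2 hxbar)
    (hcont.mono Icc_subset_Ici_self)
  refine ⟨max x (f m), ⟨hx, le_max_left _ _⟩, fun y hy => ⟨hmap hy.1, ?_⟩⟩
  rcases le_or_gt y xbar with hle | hlt
  · exact (hm ⟨hy.1, hle⟩).trans (le_max_right _ _)
  · exact (apply_lt_of_lt hstab hy.1 hlt).le.trans hy.2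

theorem lt_apply_apply_of_lt (hmap : MapsTo f (Ici 0) (Ici 0)) (hcont : ContinuousOn f (Ici 0))
    (hno2 : ∀ x ∈ Ici 0, f (f x) = x → x = xbar) {y : ℝ} (hy0 : 0 ≤ y) (hy : y < xbar) :
    y < f (f y) := by
  by_contra! hle
  have hcont2 : ContinuousOn (fun t => f (f t) - t) (Icc 0 y) :=
    ((hcont.comp hcont hmap).sub continuousOn_id).mono Icc_subset_Ici_self
  have h0 : 0 < f (f 0) := (hmap (hmap self_mem_Ici)).lt_of_ne fun h =>
    (hno2 0 self_mem_Ici h.symm ▸ hy0.trans_lt hy).false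
  obtain ⟨t, ht, hgt⟩ := intermediate_value_Icc' hy0 hcont2
    (show (0 : ℝ) ∈ Icc _ _ from ⟨by linarith, by simpa using h0.le⟩)
  have := hno2 t ht.1 (by linarith [hgt])
  linarith [ht.2]

theorem lt_of_le_apply_of_lt_apply (hfix : f xbar = xbar)
    (hstab : ∀ x ∈ Ici 0, x ≠ xbar → (f x - x) * (x - xbar) < 0) {p : ℝ} (hp0 : 0 ≤ p)
    (hle : p ≤ f p) (hlt : xbar < f p) : p < xbar := by
  by_contra! h
  rcases h.eq_or_lt with rfl | h
  · linarith
  · linarith [apply_lt_of_lt hstab hp0 h]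

theorem lt_of_apply_le_of_apply_lt (hfix : f xbar = xbar)
    (hstab : ∀ x ∈ Ici 0, x ≠ xbar → (f x - x) * (x - xbar) < 0) {q : ℝ} (hq0 : 0 ≤ q)
    (hle : f q ≤ q) (hlt : f q < xbar) : xbar < q := by
  by_contra! h
  rcases h.eq_or_lt with rfl | h
  · linarith
  · linarith [lt_apply_of_lt hstab hq0 h]

section BackwardInvariant

variable {S : Set ℝ} {l L : ℝ}

theorem le_of_isGreatest_of_backward_invariant (hmap : MapsTo f (Ici 0) (Ici 0))
    (hcont : ContinuousOn f (Ici 0)) (hfix : f xbar = xbar)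
    (hno2 : ∀ x ∈ Ici 0, f (f x) = x → x = xbar)
    (hstab : ∀ x ∈ Ici 0, x ≠ xbar → (f x - x) * (x - xbar) < 0)
    (hl : IsLeast S l) (hL : IsGreatest S L) (hl0 : 0 ≤ l)
    (hback : ∀ c ∈ S, ∃ p ∈ S, f p = c) : L ≤ xbar := by
  by_contra! hxL
  obtain ⟨p, hpS, rfl⟩ := hback L hL.1
  obtain ⟨q, hqS, rfl⟩ := hback l hl.1
  have hp0 : 0 ≤ p := hl0.trans (hl.2 hpS)
  have hpx : p < xbar := lt_of_le_apply_of_lt_apply hfix hstab hp0 (hL.2 hpS) hxL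
  have hqx : xbar < q := lt_of_apply_le_of_apply_lt hfix hstab (hl0.trans (hl.2 hqS)) (hl.2 hqS)
    ((hl.2 hpS).trans_lt hpx)
  obtain ⟨s, hs, hfs⟩ := intermediate_value_Icc' hpx.le (hcont.mono fun t ht => hp0.trans ht.1)
    (show q ∈ Icc (f xbar) (f p) from ⟨by linarith, hL.2 hqS⟩)
  have hsx : s < xbar := hs.2.lt_of_ne (by rintro rfl; linarith)
  have := lt_apply_apply_of_lt hmap hcont hno2 (hp0.trans hs.1) hsx
  rw [hfs] at this
  linarith [hs.1, hl.2 hpS]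

theorem le_of_isLeast_of_backward_invariant (hfix : f xbar = xbar)
    (hstab : ∀ x ∈ Ici 0, x ≠ xbar → (f x - x) * (x - xbar) < 0)
    (hl : IsLeast S l) (hL : IsGreatest S L) (hl0 : 0 ≤ l) (hLx : L ≤ xbar)
    (hback : ∀ c ∈ S, ∃ p ∈ S, f p = c) : xbar ≤ l := by
  by_contra! hlx
  obtain ⟨q, hqS, rfl⟩ := hback l hl.1
  have := lt_of_apply_le_of_apply_lt hfix hstab (hl0.trans (hl.2 hqS)) (hl.2 hqS) hlx
  linarith [hL.2 hqS]

end BackwardInvariant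

end Stability

theorem stmt_0_general (f : ℝ → ℝ) (hmap : MapsTo f (Ici 0) (Ici 0))
    (hcont : ContinuousOn f (Ici 0))
    (xbar : ℝ) (hxbar : xbar ∈ Ici 0) (hfix : f xbar = xbar)
    (hno2 : ∀ x ∈ Ici 0, f (f x) = x → x = xbar)
    (hstab : ∀ x ∈ Ici 0, x ≠ xbar → (f x - x) * (x - xbar) < 0) :
    ∀ x ∈ Ici 0, Tendsto (fun n => f^[n] x) atTop (𝓝 xbar) := by
  intro x hx
  obtain ⟨C, hxC, hC⟩ := exists_mapsTo_Icc hmap hcont hxbar hstab hx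
  set u : ℕ → ℝ := fun n => f^[n] x
  have hu : ∀ n, u n ∈ Icc 0 C := fun n => hC.iterate n hxC
  have hbU : IsBoundedUnder (· ≤ ·) atTop u := isBoundedUnder_of ⟨C, (hu · |>.2)⟩
  have hbL : IsBoundedUnder (· ≥ ·) atTop u := isBoundedUnder_of ⟨0, (hu · |>.1)⟩
  have hl := isLeast_mapClusterPt_liminf hbU.isCoboundedUnder_ge hbL
  have hL := isGreatest_mapClusterPt_limsup hbL.isCoboundedUnder_le hbU
  have hl0 : 0 ≤ liminf u atTop := isClosed_Ici.mem_of_mapClusterPt hl.1 (.of_forall (hu · |>.1))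
  have hback (c : ℝ) (hc : MapClusterPt c atTop u) : ∃ p, MapClusterPt p atTop u ∧ f p = c :=
    let ⟨p, _, hp⟩ := isCompact_Icc.exists_mapClusterPt_apply_eq
      (hcont.mono Icc_subset_Ici_self) hu (mapClusterPt_iterate_succ_iff.2 hc)
    ⟨p, hp⟩
  have hLx := le_of_isGreatest_of_backward_invariant hmap hcont hfix hno2 hstab hl hL hl0 hback
  have hxl := le_of_isLeast_of_backward_invariant hfix hstab hl hL hl0 hLx hback
  have hlL := liminf_le_limsup hbU hbL
  exact tendsto_of_liminf_eq_limsup (le_antisymm (hlL.trans hLx) hxl)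
    (le_antisymm hLx (hxl.trans hlL)) hbU hbL

/-- A continuous self-map of `[0,∞)` with a unique fixed point `x̄`, no 2-cycle
(`f (f x) = x → x = x̄`), satisfying `(f x - x) * (x - x̄) < 0` for all `x ≠ x̄`,
has all orbits converging to `x̄`. -/
theorem stmt_0 (f : ℝ → ℝ) (hmap : MapsTo f (Ici 0) (Ici 0))
    (hcont : ContinuousOn f (Ici 0))
    (xbar : ℝ) (hxbar : xbar ∈ Ici 0) (hfix : f xbar = xbar)
    (huniq : ∀ x ∈ Ici 0, f x = x → x = xbar)
    (hno2 : ∀ x ∈ Ici 0, f (f x) = x → x = xbar)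
    (hstab : ∀ x ∈ Ici 0, x ≠ xbar → (f x - x) * (x - xbar) < 0) :
    ∀ x ∈ Ici 0, Tendsto (fun n => f^[n] x) atTop (𝓝 xbar) :=
  stmt_0_general f hmap hcont xbar hxbar hfix hno2 hstab
end

section
/- Let a > 1 and b = (a-1)/2, and let F₀(x,y) = a²x/((1+bx)(1+b(x+y)) + abx). The partial derivatives at (1,1) satisfy |∂F₀/∂x(1,1)| + |∂F₀/∂y(1,1)| = (|a² - 4a - 1| + a² - 1)/(4a²) < 1 for all a > 1. -/
/-!
With `b = (a - 1)/2` the denominator of `F₀` at `(1, 1)` collapses to `(1 + b)(1 + 2b) + ab = a²`,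
so the quotient rule gives `∂ₓF₀(1,1) = (-a² + 4a + 1)/(4a²)` and `∂ᵧF₀(1,1) = -(a² - 1)/(4a²)`.
The bound `< 1` then reads `2a² - 4a - 2 < 4a²` or `4a < 4a²` according to the sign of `a² - 4a - 1`.
-/

namespace Example3

def den (a b x y : ℝ) : ℝ := (1 + b * x) * (1 + b * (x + y)) + a * b * x

noncomputable def F (a b x y : ℝ) : ℝ := a ^ 2 * x / den a b x y

variable (a b x y : ℝ)

theorem hasDerivAt_den_fst :
    HasDerivAt (fun x => den a b x y) (b * (1 + b * (x + y)) + (1 + b * x) * b + a * b) x := by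
  have hx : HasDerivAt (fun x : ℝ => x) 1 x := hasDerivAt_id' x
  exact ((((hx.const_mul b).const_add 1).fun_mul (((hx.add_const y).const_mul b).const_add 1)).add
    (hx.const_mul (a * b))).congr_deriv (by ring)

theorem hasDerivAt_den_snd : HasDerivAt (fun y => den a b x y) ((1 + b * x) * b) y :=
  (((((hasDerivAt_id' y).const_add x).const_mul b).const_add 1).const_mul (1 + b * x)
    |>.add_const (a * b * x)).congr_deriv (by ring)

variable {a b x y}

theorem hasDerivAt_F_fst (h : den a b x y ≠ 0) :
    HasDerivAt (fun x => F a b x y)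
      ((a ^ 2 * den a b x y - a ^ 2 * x * (b * (1 + b * (x + y)) + (1 + b * x) * b + a * b))
        / den a b x y ^ 2) x :=
  (((hasDerivAt_id' x).const_mul (a ^ 2)).fun_div (hasDerivAt_den_fst a b x y) h).congr_deriv
    (by ring)

theorem hasDerivAt_F_snd (h : den a b x y ≠ 0) :
    HasDerivAt (fun y => F a b x y) (-(a ^ 2 * x * ((1 + b * x) * b)) / den a b x y ^ 2) y :=
  ((hasDerivAt_const y (a ^ 2 * x)).fun_div (hasDerivAt_den_snd a b x y) h).congr_deriv
    (by ring)

theorem den_one_one : den a ((a - 1) / 2) 1 1 = a ^ 2 := by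
  unfold den; ring

theorem deriv_F_fst_one (ha : a ≠ 0) :
    deriv (fun x => F a ((a - 1) / 2) x 1) 1 = -(a ^ 2 - 4 * a - 1) / (4 * a ^ 2) := by
  have hD : den a ((a - 1) / 2) 1 1 ≠ 0 := by rw [den_one_one]; positivity
  rw [(hasDerivAt_F_fst hD).deriv, den_one_one]
  field_simp
  ring

theorem deriv_F_snd_one (ha : a ≠ 0) :
    deriv (fun y => F a ((a - 1) / 2) 1 y) 1 = -((a ^ 2 - 1) / (4 * a ^ 2)) := by
  have hD : den a ((a - 1) / 2) 1 1 ≠ 0 := by rw [den_one_one]; positivity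
  rw [(hasDerivAt_F_snd hD).deriv, den_one_one]
  field_simp
  ring

theorem slas_bound (ha : 1 < a) : (|a ^ 2 - 4 * a - 1| + a ^ 2 - 1) / (4 * a ^ 2) < 1 := by
  rw [div_lt_one (by positivity)]
  rcases abs_cases (a ^ 2 - 4 * a - 1) with ⟨h, _⟩ | ⟨h, _⟩ <;> rw [h] <;> nlinarith

end Example3

/-- For `a > 1`, `b = (a-1)/2`, the SLAS condition holds for
`F₀(x,y) = a²x/((1+bx)(1+b(x+y)) + abx)`:
`|∂F₀/∂x(1,1)| + |∂F₀/∂y(1,1)| = (|a²-4a-1| + a² - 1)/(4a²) < 1`. -/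
theorem stmt_10 (a : ℝ) (ha : 1 < a)
    (F₀ : ℝ → ℝ → ℝ)
    (hF : F₀ = fun x y => a^2 * x / ((1 + ((a-1)/2) * x) * (1 + ((a-1)/2) * (x + y)) + a * ((a-1)/2) * x)) :
    |deriv (fun x => F₀ x 1) 1| + |deriv (fun y => F₀ 1 y) 1|
        = (|a^2 - 4*a - 1| + a^2 - 1) / (4 * a^2) ∧
      (|a^2 - 4*a - 1| + a^2 - 1) / (4 * a^2) < 1 := by
  have hF₀ : F₀ = Example3.F a ((a - 1) / 2) := hF
  have ha0 : a ≠ 0 := by positivity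
  have h4a2 : (0 : ℝ) < 4 * a ^ 2 := by positivity
  have hdx : |deriv (fun x => F₀ x 1) 1| = |a ^ 2 - 4 * a - 1| / (4 * a ^ 2) := by
    rw [hF₀, Example3.deriv_F_fst_one ha0, abs_div, abs_neg, abs_of_pos h4a2]
  have hdy : |deriv (fun y => F₀ 1 y) 1| = (a ^ 2 - 1) / (4 * a ^ 2) := by
    have h : 0 < a ^ 2 - 1 := by nlinarith
    rw [hF₀, Example3.deriv_F_snd_one ha0, abs_neg, abs_of_pos (by positivity)]
  refine ⟨?_, Example3.slas_bound ha⟩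
  rw [hdx, hdy]
  ring
end
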